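/- arXiv:1703.03453 — 4 statements merged into one kernel-verified Lean document; each statement's English description precedes it below -/
import Mathlib

section
/- Fix H ≥ 1. Let A₁, …, A_H be finite types, for each u let p_u and q_u be probability mass functions on A_u with q_u(a) > 0 whenever p_u(a) > 0, let p = ⊗_u p_u and q = ⊗_u q_u be the product distributions, and for each t let r_t : A₁ × ⋯ × A_t → ℝ be a reward depending only on the first t coordinates. Then E_q[ ∑_{t=1}^H (∏_{u=1}^t p_u(x_u)/q_u(x_u)) · r_t(x₁,…,x_t) ] = E_p[ ∑_{t=1}^H r_t(x₁,…,x_t) ]; i.e., the per-decision importance sampling estimator is an unbiased estimator of the expected return under the evaluation distribution. -/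
open Finset

/-- Marginalizing out the coordinates not satisfying `P` with any normalized
weights gives the same value, when `f` depends only on coordinates in `P`. -/
lemma pdis_aux {ι : Type*} [Fintype ι] [DecidableEq ι] (A : ι → Type*) [∀ i, Fintype (A i)]
    (P : ι → Prop) [DecidablePred P]
    (p : ∀ i, A i → ℝ) (w w' : ∀ i, A i → ℝ)
    (hw : ∀ i, ∑ a, w i a = 1) (hw' : ∀ i, ∑ a, w' i a = 1)
    (f : (∀ i, A i) → ℝ) (hf : ∀ x y : ∀ i, A i, (∀ i, P i → x i = y i) → f x = f y) :
    ∑ x : ∀ i, A i,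
        (∏ i ∈ univ.filter P, p i (x i)) * (∏ i ∈ univ.filter (fun i => ¬ P i), w i (x i)) * f x
      = ∑ x : ∀ i, A i,
        (∏ i ∈ univ.filter P, p i (x i)) * (∏ i ∈ univ.filter (fun i => ¬ P i), w' i (x i)) * f x := by
  by_cases hne : Nonempty (∀ i, A i)
  · obtain ⟨x₀⟩ := hne
    set e := Equiv.piEquivPiSubtypeProd P A with he
    have key : ∀ (v : ∀ i, A i → ℝ), (∀ i, ∑ a, v i a = 1) →
        ∑ x : ∀ i, A i,
            (∏ i ∈ univ.filter P, p i (x i)) * (∏ i ∈ univ.filter (fun i => ¬ P i), v i (x i)) * f x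
          = ∑ a : ∀ i : {i // P i}, A i,
            (∏ i : {i // P i}, p i (a i)) * f (e.symm (a, fun i => x₀ i)) := by
      intro v hv
      rw [← Equiv.sum_comp e.symm, Fintype.sum_prod_type]
      refine Finset.sum_congr rfl fun a _ => ?_
      have h1 : ∀ b : ∀ i : {i // ¬ P i}, A i,
          (∏ i ∈ univ.filter P, p i (e.symm (a, b) i)) = ∏ i : {i // P i}, p i (a i) := by
        intro b
        rw [Finset.prod_subtype (p := P) (univ.filter P) (by simp) (fun i => p i (e.symm (a, b) i))]
        refine Finset.prod_congr rfl fun i _ => ?_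
        rw [he, Equiv.piEquivPiSubtypeProd_symm_apply, dif_pos i.2]
      have h2 : ∀ b : ∀ i : {i // ¬ P i}, A i,
          (∏ i ∈ univ.filter (fun i => ¬ P i), v i (e.symm (a, b) i)) = ∏ i : {i // ¬ P i}, v i (b i) := by
        intro b
        rw [Finset.prod_subtype (p := fun i => ¬ P i) (univ.filter (fun i => ¬ P i)) (by simp) (fun i => v i (e.symm (a, b) i))]
        refine Finset.prod_congr rfl fun i _ => ?_
        rw [he, Equiv.piEquivPiSubtypeProd_symm_apply, dif_neg i.2]
      have h3 : ∀ b : ∀ i : {i // ¬ P i}, A i,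
          f (e.symm (a, b)) = f (e.symm (a, fun i => x₀ i)) := by
        intro b
        refine hf _ _ fun i hi => ?_
        rw [he, Equiv.piEquivPiSubtypeProd_symm_apply, Equiv.piEquivPiSubtypeProd_symm_apply,
          dif_pos hi, dif_pos hi]
      calc ∑ b : ∀ i : {i // ¬ P i}, A i,
              (∏ i ∈ univ.filter P, p i (e.symm (a, b) i)) *
                (∏ i ∈ univ.filter (fun i => ¬ P i), v i (e.symm (a, b) i)) * f (e.symm (a, b))
          = ∑ b : ∀ i : {i // ¬ P i}, A i,
              (∏ i : {i // P i}, p i (a i)) * f (e.symm (a, fun i => x₀ i)) *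
                (∏ i : {i // ¬ P i}, v i (b i)) := by
            refine Finset.sum_congr rfl fun b _ => ?_
            rw [h1, h2, h3]; ring
        _ = (∏ i : {i // P i}, p i (a i)) * f (e.symm (a, fun i => x₀ i)) := by
            rw [← Finset.mul_sum]
            have : ∑ b : ∀ i : {i // ¬ P i}, A i, ∏ i : {i // ¬ P i}, v i (b i) = 1 := by
              rw [← Fintype.piFinset_univ, ← Finset.prod_univ_sum]
              simp [hv]
            rw [this, mul_one]
    rw [key w hw, key w' hw']
  · rw [not_nonempty_iff] at hne
    simp [Finset.univ_eq_empty]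

/-- **The per-decision importance sampling (PDIS) estimator is unbiased for the return.**
Trajectories are draws from the product distribution over `H` coordinates
(coordinate `u : Fin H` is step `u+1`).  For each `t : Fin H` the reward `r t`
depends only on the first `t+1` coordinates (i.e. coordinates `u` with `u ≤ t`).
Weighting each `r t` by the product of the likelihood ratios `p_u / q_u` for the
steps `u ≤ t` gives an unbiased estimate under `q` of the expected return under `p`. -/
theorem pdis_unbiased_return (H : ℕ) (hH : 1 ≤ H)
    (A : Fin H → Type*) [∀ u, Fintype (A u)]
    (p q : ∀ u, A u → ℝ)
    (hp0 : ∀ u a, 0 ≤ p u a) (hp1 : ∀ u, ∑ a, p u a = 1)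
    (hq0 : ∀ u a, 0 ≤ q u a) (hq1 : ∀ u, ∑ a, q u a = 1)
    (habs : ∀ u a, 0 < p u a → 0 < q u a)
    (r : Fin H → (∀ u, A u) → ℝ)
    (hr : ∀ (t : Fin H) (x y : ∀ u, A u),
      (∀ u : Fin H, (u : ℕ) ≤ (t : ℕ) → x u = y u) → r t x = r t y) :
    ∑ x : ∀ u, A u,
        (∏ u, q u (x u)) *
          (∑ t : Fin H,
            (∏ u ∈ Finset.univ.filter (fun u : Fin H => (u : ℕ) ≤ (t : ℕ)),
                p u (x u) / q u (x u)) * r t x)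
      = ∑ x : ∀ u, A u, (∏ u, p u (x u)) * (∑ t : Fin H, r t x) := by
  simp_rw [Finset.mul_sum]
  rw [Finset.sum_comm, Finset.sum_comm (s := univ) (t := univ)
    (f := fun x (t : Fin H) => (∏ u, p u (x u)) * r t x)]
  refine Finset.sum_congr rfl fun t _ => ?_
  -- pointwise rewrite of the LHS summand
  have hpt : ∀ x : ∀ u, A u,
      (∏ u, q u (x u)) *
          ((∏ u ∈ univ.filter (fun u : Fin H => (u : ℕ) ≤ (t : ℕ)), p u (x u) / q u (x u)) * r t x)
        = (∏ u ∈ univ.filter (fun u : Fin H => (u : ℕ) ≤ (t : ℕ)), p u (x u)) *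
            (∏ u ∈ univ.filter (fun u : Fin H => ¬ (u : ℕ) ≤ (t : ℕ)), q u (x u)) * r t x := by
    intro x
    rw [← Finset.prod_filter_mul_prod_filter_not univ (fun u : Fin H => (u : ℕ) ≤ (t : ℕ))
      (fun u => q u (x u))]
    have : (∏ u ∈ univ.filter (fun u : Fin H => (u : ℕ) ≤ (t : ℕ)), q u (x u)) *
        (∏ u ∈ univ.filter (fun u : Fin H => (u : ℕ) ≤ (t : ℕ)), p u (x u) / q u (x u))
        = ∏ u ∈ univ.filter (fun u : Fin H => (u : ℕ) ≤ (t : ℕ)), p u (x u) := by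
      rw [← Finset.prod_mul_distrib]
      refine Finset.prod_congr rfl fun u _ => ?_
      rcases eq_or_lt_of_le (hq0 u (x u)) with h | h
      · have hp : p u (x u) = 0 := by
          by_contra hc
          exact absurd (habs u (x u) ((hp0 u (x u)).lt_of_ne (Ne.symm hc))) (by rw [← h]; simp)
        simp [← h, hp]
      · field_simp
    calc _ = ((∏ u ∈ univ.filter (fun u : Fin H => (u : ℕ) ≤ (t : ℕ)), q u (x u)) *
          (∏ u ∈ univ.filter (fun u : Fin H => (u : ℕ) ≤ (t : ℕ)), p u (x u) / q u (x u))) *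
          (∏ u ∈ univ.filter (fun u : Fin H => ¬ (u : ℕ) ≤ (t : ℕ)), q u (x u)) * r t x := by ring
      _ = _ := by rw [this]
  simp_rw [hpt]
  have := pdis_aux A (fun u : Fin H => (u : ℕ) ≤ (t : ℕ)) p q p hq1 hp1 (r t)
    (fun x y h => hr t x y h)
  simp_rw [mul_assoc] at this ⊢
  rw [this]
  refine Finset.sum_congr rfl fun x _ => ?_
  rw [← mul_assoc, Finset.prod_filter_mul_prod_filter_not]
end

section
/- Let H and n be natural numbers with n ≥ 1, and let X₁, …, X_n be independent identically distributed real random variables each taking the value 2^H with probability 2^{-H} and the value 0 otherwise. Let the estimator be the sample mean M = (1/n) ∑_{i=1}^n X_i. Then E[M] = 1, and the mean squared error E[(M − 1)²] equals (2^H − 1)/n. In particular, for any fixed number of trajectories n, the mean squared error of this estimator grows exponentially in H, being bounded below by 2^{H-1}/n for H ≥ 1. -/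
/-!
Each per-trajectory estimate is `2^H` times the indicator of an event of probability `2^{-H}`,
so it has mean `1` and variance `2^{2H} · 2^{-H} (1 - 2^{-H}) = 2^H - 1`. The sample mean of
`n` pairwise independent copies keeps the mean and divides the variance by `n`; since the
estimator is unbiased, its mean squared error is this variance.
-/

open MeasureTheory ProbabilityTheory Finset
open scoped ENNReal

lemma eq_indicator_of_forall_eq_or_eq_zero {Ω : Type*} {Y : Ω → ℝ} {c : ℝ} (hc : c ≠ 0)
    (hY : ∀ ω, Y ω = c ∨ Y ω = 0) : Y = {ω | Y ω = c}.indicator fun _ => c := by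
  funext ω
  rcases hY ω with h | h
  · simp [h]
  · simp [h, hc.symm]

lemma variance_indicator_const {Ω : Type*} [MeasurableSpace Ω] {μ : Measure Ω}
    [IsProbabilityMeasure μ] {A : Set Ω} (hA : MeasurableSet A) (c : ℝ) :
    Var[A.indicator fun _ => c; μ] = c ^ 2 * μ.real A * (1 - μ.real A) := by
  have hsq : (A.indicator fun _ => c) ^ 2 = A.indicator fun _ => c ^ 2 := by
    funext ω
    by_cases hω : ω ∈ A <;> simp [hω]
  rw [variance_eq_sub (memLp_indicator_const 2 hA c (Or.inr (measure_ne_top μ A))), hsq,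
    integral_indicator_const _ hA, integral_indicator_const _ hA, smul_eq_mul, smul_eq_mul]
  ring

section SampleMean

variable {Ω ι : Type*} [MeasurableSpace Ω] {μ : Measure Ω} [Fintype ι] {X : ι → Ω → ℝ} {m : ℝ}

lemma integral_sampleMean (hX : ∀ i, Integrable (X i) μ) (hmean : ∀ i, μ[X i] = m)
    (hι : Fintype.card ι ≠ 0) :
    ∫ ω, (1 / (Fintype.card ι : ℝ)) * ∑ i, X i ω ∂μ = m := by
  rw [integral_const_mul, integral_finsetSum _ fun i _ => hX i]
  simp only [hmean, sum_const, card_univ, nsmul_eq_mul]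
  field_simp

lemma integral_sampleMean_sub_sq [IsProbabilityMeasure μ] (hX : ∀ i, MemLp (X i) 2 μ)
    (hindep : Pairwise fun i j => X i ⟂ᵢ[μ] X j) (hmean : ∀ i, μ[X i] = m) {v : ℝ}
    (hvar : ∀ i, Var[X i; μ] = v) (hι : Fintype.card ι ≠ 0) :
    ∫ ω, ((1 / (Fintype.card ι : ℝ)) * ∑ i, X i ω - m) ^ 2 ∂μ = v / Fintype.card ι := by
  have hsum : Var[∑ i, X i; μ] = Fintype.card ι * v := by
    rw [IndepFun.variance_sum (fun i _ => hX i) fun i _ j _ hij => hindep hij]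
    simp [hvar]
  have hM : AEMeasurable (fun ω => (1 / (Fintype.card ι : ℝ)) * ∑ i, X i ω) μ :=
    (Finset.aemeasurable_fun_sum _ fun i _ => (hX i).aemeasurable).const_mul _
  calc ∫ ω, ((1 / (Fintype.card ι : ℝ)) * ∑ i, X i ω - m) ^ 2 ∂μ
      = Var[fun ω => (1 / (Fintype.card ι : ℝ)) * ∑ i, X i ω; μ] := by
        rw [variance_eq_integral hM,
          integral_sampleMean (fun i => (hX i).integrable one_le_two) hmean hι]
    _ = (1 / (Fintype.card ι : ℝ)) ^ 2 * Var[∑ i, X i; μ] := by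
        rw [variance_const_mul, Finset.sum_fn]
    _ = v / Fintype.card ι := by
        rw [hsum]
        field_simp

end SampleMean

lemma moments_of_eq_two_pow_or_eq_zero {Ω : Type*} [MeasurableSpace Ω] {μ : Measure Ω}
    [IsProbabilityMeasure μ] (H : ℕ) {Y : Ω → ℝ} (hm : Measurable Y)
    (hvals : ∀ ω, Y ω = 2 ^ H ∨ Y ω = 0) (hprob : μ {ω | Y ω = 2 ^ H} = ((2 : ℝ≥0∞) ^ H)⁻¹) :
    MemLp Y 2 μ ∧ μ[Y] = 1 ∧ Var[Y; μ] = 2 ^ H - 1 := by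
  have hA : MeasurableSet {ω | Y ω = 2 ^ H} := hm (measurableSet_singleton _)
  have hμA : μ.real {ω | Y ω = 2 ^ H} = ((2 : ℝ) ^ H)⁻¹ := by
    simp [measureReal_def, hprob, ENNReal.toReal_inv]
  rw [eq_indicator_of_forall_eq_or_eq_zero (by positivity) hvals]
  refine ⟨memLp_indicator_const 2 hA _ (Or.inr (measure_ne_top μ _)), ?_, ?_⟩
  · rw [integral_indicator_const _ hA, smul_eq_mul, hμA]
    field_simp
  · rw [variance_indicator_const hA, hμA]
    field_simp

lemma two_pow_pred_le_two_pow_sub_one {H : ℕ} (hH : 1 ≤ H) : (2 : ℝ) ^ (H - 1) ≤ 2 ^ H - 1 := by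
  obtain ⟨k, rfl⟩ := Nat.exists_eq_add_of_le' hH
  have : (1 : ℝ) ≤ 2 ^ k := one_le_pow₀ one_le_two
  simp only [Nat.add_sub_cancel, pow_succ]
  linarith

/-- **Theorem 1 (quantitative form): the MSE of the PDIS estimator is `Ω(2^H)`.**
Let `X 1, …, X n` be i.i.d. random variables each taking the value `2^H` with
probability `2^{-H}` and `0` otherwise (the per-trajectory PDIS estimates in the
two-chain MDP).  The sample mean `M = (1/n) ∑ i, X i` satisfies `E[M] = 1` and
`E[(M - 1)²] = (2^H - 1)/n`; in particular, for `H ≥ 1` the mean squared error is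
at least `2^(H-1)/n`, i.e. it grows exponentially with the horizon `H`. -/
theorem pdis_sample_mean_mse {Ω : Type*} [MeasureSpace Ω]
    [IsProbabilityMeasure (ℙ : Measure Ω)]
    (H n : ℕ) (hn : 1 ≤ n) (X : Fin n → Ω → ℝ)
    (hmeas : ∀ i, Measurable (X i))
    (hindep : iIndepFun X ℙ)
    (hvals : ∀ i ω, X i ω = 2 ^ H ∨ X i ω = 0)
    (hprob : ∀ i, ℙ {ω | X i ω = 2 ^ H} = ((2 : ℝ≥0∞) ^ H)⁻¹) :
    (∫ ω, (1 / (n : ℝ)) * ∑ i, X i ω ∂ℙ) = 1 ∧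
    (∫ ω, ((1 / (n : ℝ)) * ∑ i, X i ω - 1) ^ 2 ∂ℙ) = ((2 : ℝ) ^ H - 1) / n ∧
    (1 ≤ H → (2 : ℝ) ^ (H - 1) / n ≤ ((2 : ℝ) ^ H - 1) / n) := by
  have hmoments i := moments_of_eq_two_pow_or_eq_zero H (hmeas i) (hvals i) (hprob i)
  have hcard : Fintype.card (Fin n) ≠ 0 := by rw [Fintype.card_fin]; omega
  have hmean := integral_sampleMean (fun i => (hmoments i).1.integrable one_le_two)
    (fun i => (hmoments i).2.1) hcard
  have hmse := integral_sampleMean_sub_sq (fun i => (hmoments i).1)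
    (fun i j hij => hindep.indepFun hij) (fun i => (hmoments i).2.1) (fun i => (hmoments i).2.2)
    hcard
  rw [Fintype.card_fin] at hmean hmse
  refine ⟨hmean, hmse, fun hH => ?_⟩
  gcongr
  exact two_pow_pred_le_two_pow_sub_one hH
end

section
/- Let m ≥ 1 and let K = {0, 1, …, m}. For each k ∈ K let (f_k(n))_n and (g_k(n))_n be sequences of real numbers such that f_k(n) → L_k as n → ∞. Let L* = min_{k∈K} L_k, let K* = {k ∈ K : L_k = L*}, and suppose there is G ∈ ℝ such that g_k(n) → G as n → ∞ for every k ∈ K*. Let (k'(n))_n be any sequence with k'(n) ∈ argmin_{k∈K} f_k(n) for all n. Then g_{k'(n)}(n) → G as n → ∞. -/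
open Filter

/-- **Deterministic core of the INCRIS strong-consistency proof.**
Let `K = {0, …, m}` (encoded as `Fin (m+1)`), let `f k n → L k` for each `k`,
let `K* = {k : L k = min_j L j}`, and suppose `g k n → G` for every `k ∈ K*`.
If `k' n` is an argmin of `k ↦ f k n` for every `n`, then the selected sequence
`g (k' n) n` converges to `G`. -/
theorem selected_estimate_converges (m : ℕ) (hm : 1 ≤ m)
    (f g : Fin (m + 1) → ℕ → ℝ) (L : Fin (m + 1) → ℝ) (G : ℝ)
    (hconv : ∀ k, Tendsto (fun n => f k n) atTop (nhds (L k)))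
    (hg : ∀ k : Fin (m + 1), (∀ j, L k ≤ L j) →
      Tendsto (fun n => g k n) atTop (nhds G))
    (k' : ℕ → Fin (m + 1))
    (hk' : ∀ n k, f (k' n) n ≤ f k n) :
    Tendsto (fun n => g (k' n) n) atTop (nhds G) := by
  obtain ⟨k₀, hk₀⟩ : ∃ k₀, ∀ j, L k₀ ≤ L j := Finite.exists_min L
  have hmem : ∀ᶠ n in atTop, ∀ j, L (k' n) ≤ L j := by
    by_cases hall : ∀ k, L k = L k₀
    · exact Eventually.of_forall fun n j => by rw [hall (k' n), hall j]
    · push_neg at hall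
      obtain ⟨k₁, hk₁⟩ := hall
      have hk₁' : L k₀ < L k₁ := lt_of_le_of_ne (hk₀ k₁) (Ne.symm hk₁)
      set T : Finset (Fin (m+1)) := Finset.univ.filter (fun k => L k₀ < L k) with hT
      have hTne : T.Nonempty := ⟨k₁, by simp [hT, hk₁']⟩
      set δ := T.inf' hTne (fun k => L k - L k₀) with hδ
      have hδpos : 0 < δ := by
        rw [hδ, Finset.lt_inf'_iff]
        intro k hk; simp [hT] at hk; linarith
      have hε : (0:ℝ) < δ/3 := by linarith
      have hf : ∀ᶠ n in atTop, ∀ k, |f k n - L k| < δ/3 := by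
        rw [eventually_all]
        intro k
        have := (hconv k) (Metric.ball_mem_nhds (L k) hε)
        simpa [Real.dist_eq] using this
      filter_upwards [hf] with n hn j
      have hle : L (k' n) ≤ L k₀ := by
        by_contra hlt
        push_neg at hlt
        have hmemT : k' n ∈ T := by simp [hT, hlt]
        have hδle : δ ≤ L (k' n) - L k₀ := Finset.inf'_le _ hmemT
        have h1 := hn (k' n)
        have h2 := hn k₀
        have h3 := hk' n k₀
        rw [abs_lt] at h1 h2
        linarith [h1.1, h2.2]
      exact le_trans hle (hk₀ j)
  rw [Metric.tendsto_atTop]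
  intro ε hε
  have h3 : ∀ᶠ n in atTop, ∀ k, (∀ j, L k ≤ L j) → dist (g k n) G < ε := by
    rw [eventually_all]
    intro k
    by_cases hk : ∀ j, L k ≤ L j
    · have := (hg k hk) (Metric.ball_mem_nhds G hε)
      filter_upwards [this] with n hn _
      simpa using hn
    · exact Eventually.of_forall fun n h => absurd h hk
  have hAll := h3.and hmem
  rw [eventually_atTop] at hAll
  obtain ⟨N, hN⟩ := hAll
  exact ⟨N, fun n hn => (hN n hn).1 _ (hN n hn).2⟩
end

section
/- Let (Ω, F, P) be a probability space, let m ≥ 1, and let K = {0, 1, …, m}. For each k ∈ K let (F_k(n))_n and (G_k(n))_n be sequences of real-valued random variables, and let L : K → ℝ and G* ∈ ℝ. Assume: (i) for each k ∈ K, F_k(n) → L_k almost surely as n → ∞; (ii) for each k in K* = {k ∈ K : L_k = min_j L_j}, G_k(n) → G* almost surely; and (iii) for each n, k'(n) is a (random) index with k'(n) ∈ argmin_{k∈K} F_k(n). Then G_{k'(n)}(n) → G* almost surely as n → ∞; that is, the estimator obtained by selecting, at each sample size, the candidate minimizing the estimated mean squared error is strongly consistent. -/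
open MeasureTheory ProbabilityTheory Filter

/-- Pointwise version: if all `F k · ω` converge to `L k` and all minimal-`L`
candidates' `G k · ω` converge to `Gstar`, then the selected sequence converges. -/
lemma incris_pointwise {m : ℕ} (F G : Fin (m + 1) → ℕ → ℝ)
    (L : Fin (m + 1) → ℝ) (Gstar : ℝ)
    (hF : ∀ k, Tendsto (fun n => F k n) atTop (nhds (L k)))
    (hG : ∀ k : Fin (m + 1), (∀ j, L k ≤ L j) →
      Tendsto (fun n => G k n) atTop (nhds Gstar))
    (k' : ℕ → Fin (m + 1))
    (hk' : ∀ n k, F (k' n) n ≤ F k n) :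
    Tendsto (fun n => G (k' n) n) atTop (nhds Gstar) := by
  obtain ⟨k₀, hk₀⟩ := Finite.exists_min L
  -- eventually k' n is a minimizer of L
  have hmin : ∀ᶠ n in atTop, ∀ j, L (k' n) ≤ L j := by
    by_cases hall : ∀ k : Fin (m+1), ∀ j, L k ≤ L j
    · exact Eventually.of_forall fun n => hall (k' n)
    · push_neg at hall
      -- set of non-minimizers is nonempty; take minimal gap
      set s : Finset (Fin (m+1)) :=
        Finset.univ.filter (fun k => ¬ ∀ j, L k ≤ L j) with hs
      have hsne : s.Nonempty := by
        obtain ⟨k, j, hkj⟩ := hall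
        refine ⟨k, ?_⟩
        simp only [hs, Finset.mem_filter, Finset.mem_univ, true_and]
        push_neg
        exact ⟨j, hkj⟩
      set ε : ℝ := (s.inf' hsne (fun k => L k - L k₀)) / 3 with hε
      have hεpos : 0 < ε := by
        apply div_pos _ (by norm_num)
        rw [Finset.lt_inf'_iff]
        intro k hk
        simp only [hs, Finset.mem_filter] at hk
        push_neg at hk
        obtain ⟨j, hj⟩ := hk.2
        have : L k₀ < L k := lt_of_le_of_lt (hk₀ j) hj
        linarith
      have hgap : ∀ k : Fin (m+1), ¬ (∀ j, L k ≤ L j) → L k₀ + 3 * ε ≤ L k := by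
        intro k hk
        have hks : k ∈ s := by
          simp only [hs, Finset.mem_filter, Finset.mem_univ, true_and]; exact hk
        have := Finset.inf'_le (fun k => L k - L k₀) hks
        have h3 : 3 * ε ≤ L k - L k₀ := by
          rw [hε]; linarith [this]
        linarith
      have hev : ∀ᶠ n in atTop, ∀ k, |F k n - L k| < ε := by
        rw [eventually_all]
        intro k
        have := (hF k).eventually (Metric.ball_mem_nhds (L k) hεpos)
        filter_upwards [this] with n hn
        simpa [Real.dist_eq] using hn
      filter_upwards [hev] with n hn
      by_contra hc
      have h1 : F (k' n) n ≤ F k₀ n := hk' n k₀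
      have h2 := hn k₀
      have h3 := hn (k' n)
      have h4 := hgap (k' n) hc
      rw [abs_lt] at h2 h3
      linarith
  -- uniform eventual closeness of G for minimizers
  rw [Metric.tendsto_atTop]
  intro δ hδ
  have hevG : ∀ᶠ n in atTop, ∀ k : Fin (m+1), (∀ j, L k ≤ L j) →
      dist (G k n) Gstar < δ := by
    rw [eventually_all]
    intro k
    by_cases hk : ∀ j, L k ≤ L j
    · have := (Metric.tendsto_atTop.mp (hG k hk)) δ hδ
      obtain ⟨N, hN⟩ := this
      exact eventually_atTop.mpr ⟨N, fun n hn _ => hN n hn⟩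
    · exact Eventually.of_forall fun n h => absurd h hk
  have := hmin.and hevG
  rw [eventually_atTop] at this
  obtain ⟨N, hN⟩ := this
  exact ⟨N, fun n hn => (hN n hn).2 _ (hN n hn).1⟩

/-- **Strong consistency of MSE-minimizing selection (abstract INCRIS theorem).**
For each candidate `k ∈ {0, …, m}` (encoded as `Fin (m+1)`), `F k n` is the
estimated MSE from `n` trajectories, converging almost surely to `L k`, and
`G k n` is the corresponding estimate of the expected reward, converging almost
surely to the true value `G*` whenever `L k` is minimal.  If at each `n` the
(random) index `k' n` minimizes `k ↦ F k n`, then the selected estimate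
`G (k' n) n` converges to `G*` almost surely. -/
theorem incris_strongly_consistent {Ω : Type*} [MeasureSpace Ω]
    [IsProbabilityMeasure (ℙ : Measure Ω)]
    (m : ℕ) (hm : 1 ≤ m)
    (F G : Fin (m + 1) → ℕ → Ω → ℝ) (L : Fin (m + 1) → ℝ) (Gstar : ℝ)
    (hF : ∀ k, ∀ᵐ ω ∂ℙ, Tendsto (fun n => F k n ω) atTop (nhds (L k)))
    (hG : ∀ k : Fin (m + 1), (∀ j, L k ≤ L j) →
      ∀ᵐ ω ∂ℙ, Tendsto (fun n => G k n ω) atTop (nhds Gstar))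
    (k' : ℕ → Ω → Fin (m + 1))
    (hk' : ∀ n ω k, F (k' n ω) n ω ≤ F k n ω) :
    ∀ᵐ ω ∂ℙ, Tendsto (fun n => G (k' n ω) n ω) atTop (nhds Gstar) := by
  have hFae : ∀ᵐ ω ∂ℙ, ∀ k, Tendsto (fun n => F k n ω) atTop (nhds (L k)) :=
    (ae_all_iff).mpr hF
  have hGae : ∀ᵐ ω ∂ℙ, ∀ k : Fin (m+1), (∀ j, L k ≤ L j) →
      Tendsto (fun n => G k n ω) atTop (nhds Gstar) := by
    rw [ae_all_iff]
    intro k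
    by_cases hk : ∀ j, L k ≤ L j
    · filter_upwards [hG k hk] with ω hω _ using hω
    · exact Eventually.of_forall fun ω h => absurd h hk
  filter_upwards [hFae, hGae] with ω hFω hGω
  exact incris_pointwise (fun k n => F k n ω) (fun k n => G k n ω) L Gstar
    hFω hGω (fun n => k' n ω) (fun n k => hk' n ω k)
end
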